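/- Let {(X_n, M_n, ∗)}_{n∈ℕ} be a sequence of nonempty compact non-Archimedean fuzzy metric spaces satisfying conditions (1)–(4) of the fuzzy precompactness theorem: (1) ∗ satisfies (TN1); (2) there is a nondecreasing left-continuous C : (0,∞) → (0,1] with 0 < C(s) ≤ diam_s(X_n) for all s > 0 and all n; (3) for every t > 0 and 0 < ε < 1 there is N(ε,t) with cov(X_n,ε,t) ≤ N(ε,t) for all n; (4) for every t > 0 and 0 < ε < 1, with N = N(ε,t), there exist (t,ε)-nets {x_i^n}_{i=1}^N in X_n such that for all n,m, all s > t and all i,j, if M_n(x_i^n,x_j^n,s) < M_m(x_i^m,x_j^m,s) then M_n(x_i^n,x_j^n,s)/(M_m(x_i^m,x_j^m,s) ∗ (1−ε)) ≥ M_n(x_i^n,x_j^n,t)/(M_m(x_i^m,x_j^m,t) ∗ (1−ε)). Then the sequence {(X_n, M_n, ∗)} has a Cauchy subsequence with respect to M_GH, i.e., a subsequence {X_{n_k}} such that for every t > 0 and 0 < ε < 1 there is k_0 with M_GH(X_{n_j}, X_{n_k}, t) > 1 − ε for all j,k ≥ k_0. -/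

import Mathlib

/-!
For each `t₀ = 1/(a+1)` and `δ = 1/(b+2)` the hypothesised nets give finitely many numbers
`M_n(x_i^n, x_j^n, t₀) ∈ [0, 1]`; a diagonal subsequence makes all of them converge. The limits
are at least `C(t₀) > 0` and (TN1) gives `L ∗ (1 - δ) < L`, so along the subsequence the nets
eventually are `(1 - δ)`-close at `t₀`, and the ratio condition (4) propagates this to every
later time. Two spaces with such nets are glued on `X ⊔ Y` by the cross nearness
`maxᵢ M(p, xᵢ, s) ∗ M(yᵢ, q, s) ∗ (1 - δ)` for `s > t₀` (and `C(s) ∗ C(s) ∗ (1 - δ)` below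
`t₀`); this is an admissible non-Archimedean fuzzy metric whose Hausdorff nearness at any
`t > t₀` is at least `(1 - δ) ∗ (1 - δ)`, which is close to `1` for small `δ`.
-/

open Set

/-- A continuous t-norm on `[0,1]`. -/
structure IsContinuousTNorm (star : ℝ → ℝ → ℝ) : Prop where
  mem : ∀ a ∈ Icc (0:ℝ) 1, ∀ b ∈ Icc (0:ℝ) 1, star a b ∈ Icc (0:ℝ) 1
  comm : ∀ a ∈ Icc (0:ℝ) 1, ∀ b ∈ Icc (0:ℝ) 1, star a b = star b a
  assoc : ∀ a ∈ Icc (0:ℝ) 1, ∀ b ∈ Icc (0:ℝ) 1, ∀ c ∈ Icc (0:ℝ) 1,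
    star (star a b) c = star a (star b c)
  one : ∀ a ∈ Icc (0:ℝ) 1, star a 1 = a
  mono : ∀ a b c d : ℝ, a ∈ Icc (0:ℝ) 1 → b ∈ Icc (0:ℝ) 1 → c ∈ Icc (0:ℝ) 1 →
    d ∈ Icc (0:ℝ) 1 → a ≤ c → b ≤ d → star a b ≤ star c d
  continuous : ContinuousOn (fun p : ℝ × ℝ => star p.1 p.2) (Icc 0 1 ×ˢ Icc 0 1)

/-- A fuzzy metric in the sense of Kramosil and Michalek: `M x y t` is the degree of
nearness of `x` and `y` at time `t ≥ 0`. -/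
structure IsFuzzyMetric {X : Type*} (star : ℝ → ℝ → ℝ) (M : X → X → ℝ → ℝ) : Prop where
  range : ∀ x y t, 0 ≤ t → M x y t ∈ Icc (0:ℝ) 1
  km1 : ∀ x y, M x y 0 = 0
  km2 : ∀ x y, (∀ t, 0 < t → M x y t = 1) ↔ x = y
  km3 : ∀ x y t, M x y t = M y x t
  km4 : ∀ x y z t s, 0 < t → 0 < s → star (M x y t) (M y z s) ≤ M x z (t + s)
  km5 : ∀ x y t, 0 < t → ContinuousWithinAt (M x y) (Iio t) t

/-- A non-Archimedean fuzzy metric: (KM4) is replaced by the stronger (NA). -/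
structure IsNAFuzzyMetric {X : Type*} (star : ℝ → ℝ → ℝ) (M : X → X → ℝ → ℝ) : Prop where
  range : ∀ x y t, 0 ≤ t → M x y t ∈ Icc (0:ℝ) 1
  km1 : ∀ x y, M x y 0 = 0
  km2 : ∀ x y, (∀ t, 0 < t → M x y t = 1) ↔ x = y
  km3 : ∀ x y t, M x y t = M y x t
  na : ∀ x y z t s, 0 < t → 0 < s → star (M x y t) (M y z s) ≤ M x z (max t s)
  km5 : ∀ x y t, 0 < t → ContinuousWithinAt (M x y) (Iio t) t

/-- The open ball `B_M(x, ε, t)`. -/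
def fuzzyBall {X : Type*} (M : X → X → ℝ → ℝ) (x : X) (ε t : ℝ) : Set X :=
  {y | 1 - ε < M x y t}

/-- The topology on `X` is the one induced by the fuzzy metric `M`, i.e. the open balls
form a neighbourhood basis at every point. -/
def FuzzyCompatible {X : Type*} [TopologicalSpace X] (M : X → X → ℝ → ℝ) : Prop :=
  ∀ x : X, (nhds x).HasBasis (fun p : ℝ × ℝ => 0 < p.1 ∧ p.1 < 1 ∧ 0 < p.2)
    (fun p => fuzzyBall M x p.1 p.2)

/-- The Hausdorff fuzzy distance between two subsets of a fuzzy metric space. -/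
noncomputable def fuzzyHSet {X : Type*} (M : X → X → ℝ → ℝ) (A B : Set X) (t : ℝ) : ℝ :=
  min (⨅ a : A, ⨆ b : B, M a b t) (⨅ b : B, ⨆ a : A, M a b t)

/-- The Hausdorff fuzzy distance between the two parts of a disjoint union `X ⊕ Y`. -/
noncomputable def fuzzyH {X Y : Type*} (M : (X ⊕ Y) → (X ⊕ Y) → ℝ → ℝ) (t : ℝ) : ℝ :=
  min (⨅ x : X, ⨆ y : Y, M (Sum.inl x) (Sum.inr y) t)
    (⨅ y : Y, ⨆ x : X, M (Sum.inl x) (Sum.inr y) t)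

/-- A non-Archimedean fuzzy metric on the disjoint union `X ⊕ Y` is admissible if it
restricts to the given fuzzy metrics on `X` and on `Y`. -/
def IsAdmissible {X Y : Type*} (star : ℝ → ℝ → ℝ) (MX : X → X → ℝ → ℝ)
    (MY : Y → Y → ℝ → ℝ) (M : (X ⊕ Y) → (X ⊕ Y) → ℝ → ℝ) : Prop :=
  IsNAFuzzyMetric star M ∧
    (∀ x x' t, 0 ≤ t → M (Sum.inl x) (Sum.inl x') t = MX x x' t) ∧
    (∀ y y' t, 0 ≤ t → M (Sum.inr y) (Sum.inr y') t = MY y y' t)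

/-- The non-Archimedean Gromov-Hausdorff fuzzy distance. -/
noncomputable def MGH {X Y : Type*} (star : ℝ → ℝ → ℝ) (MX : X → X → ℝ → ℝ)
    (MY : Y → Y → ℝ → ℝ) (t : ℝ) : ℝ :=
  sSup ((fun M => fuzzyH M t) '' {M | IsAdmissible star MX MY M})

/-- The `t`-diameter of a fuzzy metric space. -/
noncomputable def fuzzyDiam {X : Type*} (M : X → X → ℝ → ℝ) (s : ℝ) : ℝ :=
  ⨅ p : X × X, M p.1 p.2 s

/-- `cov(X, ε, t) ≤ N` : `X` can be covered by at most `N` balls `B(c, ε, t)`. -/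
def CovLE {X : Type*} (M : X → X → ℝ → ℝ) (ε t : ℝ) (N : ℕ) : Prop :=
  ∃ C : Finset X, C.card ≤ N ∧ ∀ x : X, ∃ c ∈ C, 1 - ε < M c x t

/-- Property (TN1) of a t-norm: `a - a ∗ b ≥ a ∗ (1 - b)`. -/
def TN1 (star : ℝ → ℝ → ℝ) : Prop :=
  ∀ a ∈ Icc (0:ℝ) 1, ∀ b ∈ Icc (0:ℝ) 1, star a (1 - b) ≤ a - star a b

/-- The standard fuzzy metric associated to a metric space. -/
noncomputable def stdFuzzy {X : Type*} [MetricSpace X] (x y : X) (t : ℝ) : ℝ :=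
  if 0 < t then t / (t + dist x y) else 0


open Filter Topology

namespace IsContinuousTNorm

variable {star : ℝ → ℝ → ℝ}

theorem star_le_left (h : IsContinuousTNorm star) {a b : ℝ} (ha : a ∈ Icc (0:ℝ) 1)
    (hb : b ∈ Icc (0:ℝ) 1) : star a b ≤ a := by
  simpa [h.one a ha] using h.mono a b a 1 ha hb ha (by simp) le_rfl hb.2

theorem star_le_right (h : IsContinuousTNorm star) {a b : ℝ} (ha : a ∈ Icc (0:ℝ) 1)
    (hb : b ∈ Icc (0:ℝ) 1) : star a b ≤ b :=
  h.comm a ha b hb ▸ h.star_le_left hb ha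

theorem star_zero (h : IsContinuousTNorm star) {a : ℝ} (ha : a ∈ Icc (0:ℝ) 1) :
    star a 0 = 0 :=
  le_antisymm (h.star_le_right ha (by simp)) (h.mem a ha 0 (by simp)).1

theorem star_mono_left (h : IsContinuousTNorm star) {a b c : ℝ} (ha : a ∈ Icc (0:ℝ) 1)
    (hb : b ∈ Icc (0:ℝ) 1) (hc : c ∈ Icc (0:ℝ) 1) (hac : a ≤ c) : star a b ≤ star c b :=
  h.mono a b c b ha hb hc hb hac le_rfl

theorem star_mono_right (h : IsContinuousTNorm star) {a b d : ℝ} (ha : a ∈ Icc (0:ℝ) 1)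
    (hb : b ∈ Icc (0:ℝ) 1) (hd : d ∈ Icc (0:ℝ) 1) (hbd : b ≤ d) : star a b ≤ star a d :=
  h.mono a b a d ha hb ha hd le_rfl hbd

theorem star_left_comm (h : IsContinuousTNorm star) {a b c : ℝ} (ha : a ∈ Icc (0:ℝ) 1)
    (hb : b ∈ Icc (0:ℝ) 1) (hc : c ∈ Icc (0:ℝ) 1) :
    star a (star b c) = star b (star a c) := by
  rw [← h.assoc a ha b hb c hc, h.comm a ha b hb, h.assoc b hb a ha c hc]

theorem star_star_star_comm (h : IsContinuousTNorm star) {a b c d : ℝ}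
    (ha : a ∈ Icc (0:ℝ) 1) (hb : b ∈ Icc (0:ℝ) 1) (hc : c ∈ Icc (0:ℝ) 1)
    (hd : d ∈ Icc (0:ℝ) 1) :
    star (star a b) (star c d) = star (star a c) (star b d) := by
  rw [h.assoc a ha b hb _ (h.mem c hc d hd), h.star_left_comm hb hc hd,
    ← h.assoc a ha c hc _ (h.mem b hb d hd)]

theorem tendsto (h : IsContinuousTNorm star) {α : Type*} {l : Filter α} {f g : α → ℝ}
    {a b : ℝ} (ha : a ∈ Icc (0:ℝ) 1) (hb : b ∈ Icc (0:ℝ) 1)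
    (hf : Tendsto f l (𝓝 a)) (hg : Tendsto g l (𝓝 b))
    (hfm : ∀ᶠ x in l, f x ∈ Icc (0:ℝ) 1) (hgm : ∀ᶠ x in l, g x ∈ Icc (0:ℝ) 1) :
    Tendsto (fun x => star (f x) (g x)) l (𝓝 (star a b)) :=
  (h.continuous (a, b) ⟨ha, hb⟩).tendsto.comp <| tendsto_nhdsWithin_iff.mpr
    ⟨hf.prodMk_nhds hg, by filter_upwards [hfm, hgm] with x h1 h2 using ⟨h1, h2⟩⟩

theorem continuousOn_star_left (h : IsContinuousTNorm star) {a : ℝ}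
    (ha : a ∈ Icc (0:ℝ) 1) : ContinuousOn (star a) (Icc 0 1) :=
  h.continuous.comp (Continuous.prodMk_right a).continuousOn fun _ hy => ⟨ha, hy⟩

/-- The set of `y ∈ [0, 1]` with `a ∗ y = a` is closed and closed under `∗`, so its least
element is idempotent. -/
theorem exists_idempotent_of_star_eq (h : IsContinuousTNorm star) {a c : ℝ}
    (ha : a ∈ Icc (0:ℝ) 1) (hc : c ∈ Icc (0:ℝ) 1) (hac : star a c = a) :
    ∃ e, a ≤ e ∧ e ≤ c ∧ star e e = e := by
  set S := Icc (0:ℝ) 1 ∩ star a ⁻¹' {a}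
  have hS : IsClosed S :=
    (h.continuousOn_star_left ha).preimage_isClosed_of_isClosed isClosed_Icc isClosed_singleton
  have hSbdd : BddBelow S := ⟨0, fun y hy => hy.1.1⟩
  obtain ⟨⟨he0, he1⟩, hae⟩ : sInf S ∈ S := hS.csInf_mem ⟨c, hc, hac⟩ hSbdd
  set e := sInf S
  have he : e ∈ Icc (0:ℝ) 1 := ⟨he0, he1⟩
  have hee : star e e ∈ S := ⟨h.mem e he e he, by
    simp only [mem_preimage, mem_singleton_iff] at hae ⊢
    rw [← h.assoc a ha e he e he, hae, hae]⟩
  refine ⟨e, ?_, csInf_le hSbdd ⟨hc, hac⟩, le_antisymm (h.star_le_left he he) ?_⟩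
  · simp only [mem_preimage, mem_singleton_iff] at hae
    exact hae ▸ h.star_le_right ha he
  · exact csInf_le hSbdd hee

theorem star_eq_of_idempotent (h : IsContinuousTNorm star) {e y : ℝ}
    (he : e ∈ Icc (0:ℝ) 1) (hee : star e e = e) (hy : y ∈ Icc 0 e) : star e y = y := by
  obtain ⟨z, hz, rfl⟩ := intermediate_value_Icc zero_le_one (h.continuousOn_star_left he)
    (by rwa [h.star_zero he, h.one e he])
  rw [← h.assoc e he e he z hz, hee]

end IsContinuousTNorm

/-- Under (TN1), an idempotent `e ∈ (0, 1)` would satisfy `e ∗ (1 - e) = 0`, while it fixes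
every point of `[0, e]`. -/
theorem TN1.star_lt_self {star : ℝ → ℝ → ℝ} (htn1 : TN1 star) (h : IsContinuousTNorm star)
    {a c : ℝ} (ha0 : 0 < a) (ha1 : a ≤ 1) (hc0 : 0 ≤ c) (hc1 : c < 1) : star a c < a := by
  have ha : a ∈ Icc (0:ℝ) 1 := ⟨ha0.le, ha1⟩
  have hc : c ∈ Icc (0:ℝ) 1 := ⟨hc0, hc1.le⟩
  refine (h.star_le_left ha hc).lt_of_ne fun hac => ?_
  obtain ⟨e, hae, hec, hee⟩ := h.exists_idempotent_of_star_eq ha hc hac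
  have he : e ∈ Icc (0:ℝ) 1 := ⟨ha0.le.trans hae, hec.trans hc.2⟩
  have h1e : 1 - e ∈ Icc (0:ℝ) 1 := ⟨by linarith, by linarith⟩
  have hzero : star e (1 - e) ≤ 0 := by linarith [htn1 e he e he]
  rcases le_total e (1 - e) with hle | hle
  · linarith [h.star_mono_right he he h1e hle]
  · linarith [h.star_eq_of_idempotent he hee ⟨h1e.1, hle⟩]

namespace IsNAFuzzyMetric

variable {star : ℝ → ℝ → ℝ} {X : Type*} {M : X → X → ℝ → ℝ}

theorem self_eq_one (hM : IsNAFuzzyMetric star M) (x : X) {t : ℝ} (ht : 0 < t) :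
    M x x t = 1 :=
  (hM.km2 x x).mpr rfl t ht

theorem na_self (hM : IsNAFuzzyMetric star M) (x y z : X) {t : ℝ} (ht : 0 < t) :
    star (M x y t) (M y z t) ≤ M x z t := by
  simpa using hM.na x y z t t ht ht

theorem mono (hM : IsNAFuzzyMetric star M) (h : IsContinuousTNorm star) (x y : X)
    {s s' : ℝ} (hs : 0 < s) (hss' : s ≤ s') : M x y s ≤ M x y s' := by
  have hs' := hs.trans_le hss'
  simpa [hM.self_eq_one y hs', h.one _ (hM.range x y s hs.le), max_eq_right hss'] using
    hM.na x y y s s' hs hs'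

theorem fuzzyDiam_le (hM : IsNAFuzzyMetric star M) (x y : X) {s : ℝ} (hs : 0 ≤ s) :
    fuzzyDiam M s ≤ M x y s :=
  ciInf_le ⟨0, by rintro _ ⟨p, rfl⟩; exact (hM.range _ _ s hs).1⟩ (x, y)

end IsNAFuzzyMetric

section Glue

variable {star : ℝ → ℝ → ℝ} {Xa Xb : Type*} {Ma : Xa → Xa → ℝ → ℝ} {Mb : Xb → Xb → ℝ → ℝ}
  {G : Xa → Xb → ℝ → ℝ}

def glue (Ma : Xa → Xa → ℝ → ℝ) (Mb : Xb → Xb → ℝ → ℝ) (G : Xa → Xb → ℝ → ℝ) :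
    Xa ⊕ Xb → Xa ⊕ Xb → ℝ → ℝ
  | .inl p, .inl p' => Ma p p'
  | .inl p, .inr q => G p q
  | .inr q, .inl p => G p q
  | .inr q, .inr q' => Mb q q'

theorem isNAFuzzyMetric_glue (h : IsContinuousTNorm star) (hMa : IsNAFuzzyMetric star Ma)
    (hMb : IsNAFuzzyMetric star Mb) (hGmem : ∀ p q s, 0 ≤ s → G p q s ∈ Icc (0:ℝ) 1)
    (hG0 : ∀ p q, G p q 0 = 0) (hGlt : ∀ p q, ∃ t, 0 < t ∧ G p q t < 1)
    (hGa : ∀ p p' q t s, 0 < t → 0 < s → star (Ma p p' t) (G p' q s) ≤ G p q (max t s))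
    (hGb : ∀ p q q' t s, 0 < t → 0 < s → star (G p q t) (Mb q q' s) ≤ G p q' (max t s))
    (hGGa : ∀ p p' q t s, 0 < t → 0 < s → star (G p q t) (G p' q s) ≤ Ma p p' (max t s))
    (hGGb : ∀ p q q' t s, 0 < t → 0 < s → star (G p q t) (G p q' s) ≤ Mb q q' (max t s))
    (hGlc : ∀ p q t, 0 < t → ContinuousWithinAt (G p q) (Iio t) t) :
    IsNAFuzzyMetric star (glue Ma Mb G) where
  range x y t ht := by
    cases x <;> cases y
    exacts [hMa.range _ _ t ht, hGmem _ _ t ht, hGmem _ _ t ht, hMb.range _ _ t ht]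
  km1 x y := by
    cases x <;> cases y
    exacts [hMa.km1 _ _, hG0 _ _, hG0 _ _, hMb.km1 _ _]
  km2 x y := by
    cases x <;> cases y
    · exact (hMa.km2 _ _).trans Sum.inl_injective.eq_iff.symm
    all_goals try exact (hMb.km2 _ _).trans Sum.inr_injective.eq_iff.symm
    all_goals
      refine iff_of_false (fun h1 => ?_) (by simp)
      obtain ⟨t, ht, hlt⟩ := hGlt _ _
      exact hlt.ne (h1 t ht)
  km3 x y t := by
    cases x <;> cases y
    exacts [hMa.km3 _ _ t, rfl, rfl, hMb.km3 _ _ t]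
  na x y z t s ht hs := by
    rcases x with p | q <;> rcases y with p' | q' <;> rcases z with p'' | q''
    · exact hMa.na p p' p'' t s ht hs
    · exact hGa p p' q'' t s ht hs
    · exact hGGa p p'' q' t s ht hs
    · exact hGb p q' q'' t s ht hs
    · change star (G p' q t) (Ma p' p'' s) ≤ G p'' q (max t s)
      rw [h.comm _ (hGmem p' q t ht.le) _ (hMa.range _ _ _ hs.le), hMa.km3, max_comm]
      exact hGa p'' p' q s t hs ht
    · exact hGGb p' q q'' t s ht hs
    · change star (Mb q q' t) (G p'' q' s) ≤ G p'' q (max t s)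
      rw [h.comm _ (hMb.range _ _ _ ht.le) _ (hGmem p'' q' s hs.le), hMb.km3, max_comm]
      exact hGb p'' q' q s t hs ht
    · exact hMb.na q q' q'' t s ht hs
  km5 x y t ht := by
    cases x <;> cases y
    exacts [hMa.km5 _ _ t ht, hGlc _ _ t ht, hGlc _ _ t ht, hMb.km5 _ _ t ht]

end Glue

theorem fuzzyH_le_one {star : ℝ → ℝ → ℝ} {X Y : Type*} [Nonempty X]
    {M : X ⊕ Y → X ⊕ Y → ℝ → ℝ} (hM : IsNAFuzzyMetric star M) {t : ℝ} (ht : 0 ≤ t) :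
    fuzzyH M t ≤ 1 := by
  have hsup : ∀ x, ⨆ y, M (.inl x) (.inr y) t ∈ Icc (0:ℝ) 1 := fun x =>
    ⟨Real.iSup_nonneg fun y => (hM.range _ _ t ht).1,
      Real.iSup_le (fun y => (hM.range _ _ t ht).2) zero_le_one⟩
  obtain ⟨x⟩ := ‹Nonempty X›
  exact (min_le_left _ _).trans <|
    (ciInf_le ⟨0, by rintro _ ⟨x, rfl⟩; exact (hsup x).1⟩ x).trans (hsup x).2

theorem le_fuzzyH {star : ℝ → ℝ → ℝ} {X Y : Type*} [Nonempty X] [Nonempty Y]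
    {M : X ⊕ Y → X ⊕ Y → ℝ → ℝ} (hM : IsNAFuzzyMetric star M) {t c : ℝ} (ht : 0 ≤ t)
    (hX : ∀ x, ∃ y, c ≤ M (.inl x) (.inr y) t) (hY : ∀ y, ∃ x, c ≤ M (.inl x) (.inr y) t) :
    c ≤ fuzzyH M t := by
  have hbdd : ∀ x y, M x y t ≤ 1 := fun x y => (hM.range x y t ht).2
  refine le_min (le_ciInf fun x => ?_) (le_ciInf fun y => ?_)
  · obtain ⟨y, hy⟩ := hX x
    exact hy.trans (le_ciSup (f := fun y => M (.inl x) (.inr y) t)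
      ⟨1, by rintro _ ⟨y, rfl⟩; exact hbdd _ _⟩ y)
  · obtain ⟨x, hx⟩ := hY y
    exact hx.trans (le_ciSup (f := fun x => M (.inl x) (.inr y) t)
      ⟨1, by rintro _ ⟨x, rfl⟩; exact hbdd _ _⟩ x)

theorem fuzzyH_le_MGH {star : ℝ → ℝ → ℝ} {Xa Xb : Type*} [Nonempty Xa]
    {Ma : Xa → Xa → ℝ → ℝ} {Mb : Xb → Xb → ℝ → ℝ} {M : Xa ⊕ Xb → Xa ⊕ Xb → ℝ → ℝ}
    (hM : IsAdmissible star Ma Mb M) {t : ℝ} (ht : 0 ≤ t) :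
    fuzzyH M t ≤ MGH star Ma Mb t :=
  le_csSup ⟨1, by rintro _ ⟨M', hM', rfl⟩; exact fuzzyH_le_one hM'.1 ht⟩ ⟨M, hM, rfl⟩

section NetCross

variable {star : ℝ → ℝ → ℝ} {Xa Xb ι : Type*} [Fintype ι] [Nonempty ι]
  {Ma : Xa → Xa → ℝ → ℝ} {Mb : Xb → Xb → ℝ → ℝ} {xa : ι → Xa} {xb : ι → Xb}

def netCross (star : ℝ → ℝ → ℝ) (Ma : Xa → Xa → ℝ → ℝ) (Mb : Xb → Xb → ℝ → ℝ)
    (xa : ι → Xa) (xb : ι → Xb) (p : Xa) (q : Xb) (s : ℝ) : ℝ :=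
  Finset.univ.sup' Finset.univ_nonempty fun i => star (Ma p (xa i) s) (Mb (xb i) q s)

theorem le_netCross (p : Xa) (q : Xb) (s : ℝ) (i : ι) :
    star (Ma p (xa i) s) (Mb (xb i) q s) ≤ netCross star Ma Mb xa xb p q s :=
  Finset.le_sup' (fun i => star (Ma p (xa i) s) (Mb (xb i) q s)) (Finset.mem_univ i)

theorem exists_netCross_eq (p : Xa) (q : Xb) (s : ℝ) :
    ∃ i, netCross star Ma Mb xa xb p q s = star (Ma p (xa i) s) (Mb (xb i) q s) := by
  obtain ⟨i, -, hi⟩ := Finset.exists_mem_eq_sup' Finset.univ_nonempty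
    fun i => star (Ma p (xa i) s) (Mb (xb i) q s)
  exact ⟨i, hi⟩

theorem netCross_swap (h : IsContinuousTNorm star) (hMa : IsNAFuzzyMetric star Ma)
    (hMb : IsNAFuzzyMetric star Mb) (p : Xa) (q : Xb) {s : ℝ} (hs : 0 ≤ s) :
    netCross star Mb Ma xb xa q p s = netCross star Ma Mb xa xb p q s :=
  Finset.sup'_congr _ rfl fun i _ => by
    rw [hMb.km3 q, hMa.km3 _ p, h.comm _ (hMb.range _ _ _ hs) _ (hMa.range _ _ _ hs)]

theorem netCross_mem (h : IsContinuousTNorm star) (hMa : IsNAFuzzyMetric star Ma)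
    (hMb : IsNAFuzzyMetric star Mb) (p : Xa) (q : Xb) {s : ℝ} (hs : 0 ≤ s) :
    netCross star Ma Mb xa xb p q s ∈ Icc (0:ℝ) 1 := by
  obtain ⟨i, hi⟩ := exists_netCross_eq (star := star) (Ma := Ma) (Mb := Mb) (xa := xa)
    (xb := xb) p q s
  exact hi ▸ h.mem _ (hMa.range _ _ _ hs) _ (hMb.range _ _ _ hs)

theorem star_le_netCross (h : IsContinuousTNorm star) (hMa : IsNAFuzzyMetric star Ma)
    (hMb : IsNAFuzzyMetric star Mb) {c s : ℝ} (hc : c ∈ Icc (0:ℝ) 1) (hs : 0 ≤ s)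
    (hca : ∀ p p', c ≤ Ma p p' s) (hcb : ∀ q q', c ≤ Mb q q' s) (p : Xa) (q : Xb) :
    star c c ≤ netCross star Ma Mb xa xb p q s := by
  obtain ⟨i⟩ := ‹Nonempty ι›
  exact (h.mono _ _ _ _ hc hc (hMa.range _ _ _ hs) (hMb.range _ _ _ hs) (hca _ _)
    (hcb _ _)).trans (le_netCross p q s i)

theorem star_netCross_le (h : IsContinuousTNorm star) (hMa : IsNAFuzzyMetric star Ma)
    (hMb : IsNAFuzzyMetric star Mb) (p p' : Xa) (q : Xb) {t s : ℝ} (ht : 0 < t)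
    (hs : 0 < s) :
    star (Ma p p' t) (netCross star Ma Mb xa xb p' q s) ≤
      netCross star Ma Mb xa xb p q (max t s) := by
  have hu : 0 < max t s := lt_max_of_lt_left ht
  obtain ⟨j, hj⟩ := exists_netCross_eq (star := star) (Ma := Ma) (Mb := Mb) (xa := xa)
    (xb := xb) p' q s
  have hpp' := hMa.range p p' t ht.le
  have hb₁ := hMa.range p' (xa j) s hs.le
  have hb₂ := hMb.range (xb j) q s hs.le
  rw [hj, ← h.assoc _ hpp' _ hb₁ _ hb₂]
  exact (h.mono _ _ _ _ (h.mem _ hpp' _ hb₁) hb₂ (hMa.range _ _ _ hu.le)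
    (hMb.range _ _ _ hu.le) (hMa.na p p' (xa j) t s ht hs)
    (hMb.mono h _ _ hs (le_max_right t s))).trans (le_netCross p q _ j)

/-- Follow the chain `p, xa i, xa j, p'`, where `i` and `j` realise the two cross nearnesses. -/
theorem netCross_star_netCross_le (h : IsContinuousTNorm star)
    (hMa : IsNAFuzzyMetric star Ma) (hMb : IsNAFuzzyMetric star Mb) {e : ℝ}
    (he : e ∈ Icc (0:ℝ) 1) (p p' : Xa) (q : Xb) {t s : ℝ} (ht : 0 < t) (hs : 0 < s)
    (hclose : ∀ i j, star (Mb (xb i) (xb j) (max t s)) e ≤ Ma (xa i) (xa j) (max t s)) :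
    star (star (netCross star Ma Mb xa xb p q t) e)
      (star (netCross star Ma Mb xa xb p' q s) e) ≤ Ma p p' (max t s) := by
  set u := max t s
  have hu : 0 < u := lt_max_of_lt_left ht
  obtain ⟨i, hi⟩ := exists_netCross_eq (star := star) (Ma := Ma) (Mb := Mb) (xa := xa)
    (xb := xb) p q t
  obtain ⟨j, hj⟩ := exists_netCross_eq (star := star) (Ma := Ma) (Mb := Mb) (xa := xa)
    (xb := xb) p' q s
  have ha₁ := hMa.range p (xa i) t ht.le
  have ha₂ := hMb.range (xb i) q t ht.le
  have hb₁ := hMa.range p' (xa j) s hs.le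
  have hb₂ := hMb.range (xb j) q s hs.le
  have ha₂b₂ := h.mem _ ha₂ _ hb₂
  have hee := h.mem e he e he
  have hpi := hMa.range p (xa i) u hu.le
  have hp'j := hMa.range p' (xa j) u hu.le
  have hij := hMa.range (xa i) (xa j) u hu.le
  have hBij := hMb.range (xb i) (xb j) u hu.le
  have hqq : star (Mb (xb i) q t) (Mb (xb j) q s) ≤ Mb (xb i) (xb j) u :=
    hMb.km3 q (xb j) s ▸ hMb.na (xb i) q (xb j) t s ht hs
  have hmid : star (star (Mb (xb i) q t) (Mb (xb j) q s)) (star e e) ≤ Ma (xa i) (xa j) u :=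
    calc _ ≤ star (star (Mb (xb i) q t) (Mb (xb j) q s)) e :=
          h.star_mono_right ha₂b₂ hee he (h.star_le_left he he)
      _ ≤ star (Mb (xb i) (xb j) u) e := h.star_mono_left ha₂b₂ he hBij hqq
      _ ≤ Ma (xa i) (xa j) u := hclose i j
  rw [hi, hj, h.star_star_star_comm (h.mem _ ha₁ _ ha₂) he (h.mem _ hb₁ _ hb₂) he,
    h.star_star_star_comm ha₁ ha₂ hb₁ hb₂, h.assoc _ (h.mem _ ha₁ _ hb₁) _ ha₂b₂ _ hee]
  calc _ ≤ star (star (Ma p (xa i) u) (Ma p' (xa j) u)) (Ma (xa i) (xa j) u) :=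
        h.mono _ _ _ _ (h.mem _ ha₁ _ hb₁) (h.mem _ ha₂b₂ _ hee) (h.mem _ hpi _ hp'j) hij
          (h.mono _ _ _ _ ha₁ hb₁ hpi hp'j (hMa.mono h _ _ ht (le_max_left t s))
            (hMa.mono h _ _ hs (le_max_right t s))) hmid
    _ = star (Ma p (xa i) u) (star (Ma (xa i) (xa j) u) (Ma (xa j) p' u)) := by
        rw [h.assoc _ hpi _ hp'j _ hij, h.comm _ hp'j _ hij, hMa.km3 p']
    _ ≤ star (Ma p (xa i) u) (Ma (xa i) p' u) :=
        h.star_mono_right hpi (h.mem _ hij _ (hMa.km3 p' _ u ▸ hp'j))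
          (hMa.range _ _ _ hu.le) (hMa.na_self _ _ _ hu)
    _ ≤ Ma p p' u := hMa.na_self _ _ _ hu

end NetCross

section GlueCross

variable {star : ℝ → ℝ → ℝ} {Xa Xb ι : Type*} [Fintype ι] [Nonempty ι]
  {Ma : Xa → Xa → ℝ → ℝ} {Mb : Xb → Xb → ℝ → ℝ} {xa : ι → Xa} {xb : ι → Xb}
  {C : ℝ → ℝ} {t₀ e : ℝ}

/-- Below `t₀` the cross nearness is the common lower bound `C ∗ C ∗ e`: this keeps it
left-continuous and below both diameters. -/
noncomputable def glueCross (star : ℝ → ℝ → ℝ) (Ma : Xa → Xa → ℝ → ℝ) (Mb : Xb → Xb → ℝ → ℝ)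
    (xa : ι → Xa) (xb : ι → Xb) (C : ℝ → ℝ) (t₀ e : ℝ) (p : Xa) (q : Xb) (s : ℝ) : ℝ :=
  if t₀ < s then star (netCross star Ma Mb xa xb p q s) e
  else if 0 < s then star (star (C s) (C s)) e else 0

theorem glueCross_of_lt (p : Xa) (q : Xb) {s : ℝ} (hs : t₀ < s) :
    glueCross star Ma Mb xa xb C t₀ e p q s = star (netCross star Ma Mb xa xb p q s) e :=
  if_pos hs

theorem glueCross_of_le (p : Xa) (q : Xb) {s : ℝ} (hs0 : 0 < s) (hs : s ≤ t₀) :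
    glueCross star Ma Mb xa xb C t₀ e p q s = star (star (C s) (C s)) e := by
  rw [glueCross, if_neg hs.not_gt, if_pos hs0]

theorem glueCross_zero (ht₀ : 0 ≤ t₀) (p : Xa) (q : Xb) :
    glueCross star Ma Mb xa xb C t₀ e p q 0 = 0 := by
  rw [glueCross, if_neg ht₀.not_gt, if_neg (lt_irrefl 0)]

theorem glueCross_swap (h : IsContinuousTNorm star) (hMa : IsNAFuzzyMetric star Ma)
    (hMb : IsNAFuzzyMetric star Mb) (ht₀ : 0 ≤ t₀) (p : Xa) (q : Xb) (s : ℝ) :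
    glueCross star Mb Ma xb xa C t₀ e q p s = glueCross star Ma Mb xa xb C t₀ e p q s := by
  unfold glueCross
  split_ifs with hs
  · rw [netCross_swap h hMa hMb p q (ht₀.trans hs.le)]
  all_goals rfl

theorem glueCross_mem_and_le (h : IsContinuousTNorm star) (hMa : IsNAFuzzyMetric star Ma)
    (hMb : IsNAFuzzyMetric star Mb) (hC : ∀ s, 0 < s → C s ∈ Icc (0:ℝ) 1)
    (he : e ∈ Icc (0:ℝ) 1) (p : Xa) (q : Xb) {s : ℝ} (hs : 0 ≤ s) :
    glueCross star Ma Mb xa xb C t₀ e p q s ∈ Icc (0:ℝ) 1 ∧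
      glueCross star Ma Mb xa xb C t₀ e p q s ≤ e := by
  unfold glueCross
  split_ifs with h₁ h₂
  · have hD := netCross_mem (xa := xa) (xb := xb) h hMa hMb p q hs
    exact ⟨h.mem _ hD _ he, h.star_le_right hD he⟩
  · have hCC := h.mem _ (hC s h₂) _ (hC s h₂)
    exact ⟨h.mem _ hCC _ he, h.star_le_right hCC he⟩
  · exact ⟨⟨le_rfl, zero_le_one⟩, he.1⟩

theorem glueCross_le_C (h : IsContinuousTNorm star) (hC : ∀ s, 0 < s → C s ∈ Icc (0:ℝ) 1)
    (he : e ∈ Icc (0:ℝ) 1) (p : Xa) (q : Xb) {s : ℝ} (hs0 : 0 < s) (hs : s ≤ t₀) :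
    glueCross star Ma Mb xa xb C t₀ e p q s ≤ C s := by
  rw [glueCross_of_le p q hs0 hs]
  exact (h.star_le_left (h.mem _ (hC s hs0) _ (hC s hs0)) he).trans
    (h.star_le_left (hC s hs0) (hC s hs0))

theorem star_C_le_glueCross (h : IsContinuousTNorm star) (hMa : IsNAFuzzyMetric star Ma)
    (hMb : IsNAFuzzyMetric star Mb) (hC : ∀ s, 0 < s → C s ∈ Icc (0:ℝ) 1)
    (hCmono : MonotoneOn C (Ioi 0)) (hCa : ∀ s, 0 < s → ∀ p p', C s ≤ Ma p p' s)
    (hCb : ∀ s, 0 < s → ∀ q q', C s ≤ Mb q q' s) (he : e ∈ Icc (0:ℝ) 1) (p : Xa) (q : Xb)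
    {w u : ℝ} (hw : 0 < w) (hwu : w ≤ u) :
    star (star (C w) (C w)) e ≤ glueCross star Ma Mb xa xb C t₀ e p q u := by
  have hu := hw.trans_le hwu
  have hCwu : C w ≤ C u := hCmono hw hu hwu
  have hCw := hC w hw
  have hCC := h.mem _ hCw _ hCw
  rcases lt_or_ge t₀ u with hu₀ | hu₀
  · rw [glueCross_of_lt p q hu₀]
    refine h.star_mono_left hCC he (netCross_mem h hMa hMb p q hu.le) ?_
    exact star_le_netCross h hMa hMb hCw hu.le (fun _ _ => hCwu.trans (hCa u hu _ _))
      (fun _ _ => hCwu.trans (hCb u hu _ _)) p q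
  · rw [glueCross_of_le p q hu hu₀]
    exact h.star_mono_left hCC he (h.mem _ (hC u hu) _ (hC u hu))
      (h.mono _ _ _ _ hCw hCw (hC u hu) (hC u hu) hCwu hCwu)

theorem star_glueCross_le (h : IsContinuousTNorm star) (hMa : IsNAFuzzyMetric star Ma)
    (hMb : IsNAFuzzyMetric star Mb) (hC : ∀ s, 0 < s → C s ∈ Icc (0:ℝ) 1)
    (hCmono : MonotoneOn C (Ioi 0)) (hCa : ∀ s, 0 < s → ∀ p p', C s ≤ Ma p p' s)
    (hCb : ∀ s, 0 < s → ∀ q q', C s ≤ Mb q q' s) (he : e ∈ Icc (0:ℝ) 1)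
    (p p' : Xa) (q : Xb) {t s : ℝ} (ht : 0 < t) (hs : 0 < s) :
    star (Ma p p' t) (glueCross star Ma Mb xa xb C t₀ e p' q s) ≤
      glueCross star Ma Mb xa xb C t₀ e p q (max t s) := by
  have hpp' := hMa.range p p' t ht.le
  rcases lt_or_ge t₀ s with hs₀ | hs₀
  · have hD := netCross_mem (xa := xa) (xb := xb) h hMa hMb p' q hs.le
    rw [glueCross_of_lt p' q hs₀, glueCross_of_lt p q (hs₀.trans_le (le_max_right t s)),
      ← h.assoc _ hpp' _ hD _ he]
    exact h.star_mono_left (h.mem _ hpp' _ hD) he (netCross_mem h hMa hMb p q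
      (hs.le.trans (le_max_right t s))) (star_netCross_le h hMa hMb p p' q ht hs)
  · rw [glueCross_of_le p' q hs hs₀]
    exact (h.star_le_right hpp' (h.mem _ (h.mem _ (hC s hs) _ (hC s hs)) _ he)).trans
      (star_C_le_glueCross h hMa hMb hC hCmono hCa hCb he p q hs (le_max_right t s))

theorem glueCross_star_glueCross_le (h : IsContinuousTNorm star)
    (hMa : IsNAFuzzyMetric star Ma) (hMb : IsNAFuzzyMetric star Mb)
    (hC : ∀ s, 0 < s → C s ∈ Icc (0:ℝ) 1) (hCmono : MonotoneOn C (Ioi 0))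
    (hCa : ∀ s, 0 < s → ∀ p p', C s ≤ Ma p p' s) (he : e ∈ Icc (0:ℝ) 1)
    (hclose : ∀ u, t₀ < u → ∀ i j, star (Mb (xb i) (xb j) u) e ≤ Ma (xa i) (xa j) u)
    (p p' : Xa) (q : Xb) {t s : ℝ} (ht : 0 < t) (hs : 0 < s) :
    star (glueCross star Ma Mb xa xb C t₀ e p q t)
      (glueCross star Ma Mb xa xb C t₀ e p' q s) ≤ Ma p p' (max t s) := by
  have hu : 0 < max t s := lt_max_of_lt_left ht
  have hG := fun p q s (hs : 0 < s) =>
    (glueCross_mem_and_le (xa := xa) (xb := xb) (t₀ := t₀) h hMa hMb hC he p q hs.le).1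
  have hsmall : ∀ w, 0 < w → w ≤ t₀ → w ≤ max t s → ∀ x y,
      glueCross star Ma Mb xa xb C t₀ e x y w ≤ Ma p p' (max t s) :=
    fun w hw hw₀ hwu x y => (glueCross_le_C h hC he x y hw hw₀).trans
      ((hCmono hw hu hwu).trans (hCa _ hu _ _))
  rcases le_or_gt t t₀ with ht₀ | ht₀
  · exact (h.star_le_left (hG p q t ht) (hG p' q s hs)).trans
      (hsmall t ht ht₀ (le_max_left t s) p q)
  rcases le_or_gt s t₀ with hs₀ | hs₀
  · exact (h.star_le_right (hG p q t ht) (hG p' q s hs)).trans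
      (hsmall s hs hs₀ (le_max_right t s) p' q)
  rw [glueCross_of_lt p q ht₀, glueCross_of_lt p' q hs₀]
  exact netCross_star_netCross_le h hMa hMb he p p' q ht hs
    (hclose _ (ht₀.trans_le (le_max_left t s)))

theorem continuousWithinAt_glueCross (h : IsContinuousTNorm star)
    (hMa : IsNAFuzzyMetric star Ma) (hMb : IsNAFuzzyMetric star Mb)
    (hC : ∀ s, 0 < s → C s ∈ Icc (0:ℝ) 1) (hClc : ∀ s, 0 < s → ContinuousWithinAt C (Iio s) s)
    (he : e ∈ Icc (0:ℝ) 1) (p : Xa) (q : Xb) {u : ℝ} (hu : 0 < u) :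
    ContinuousWithinAt (glueCross star Ma Mb xa xb C t₀ e p q) (Iio u) u := by
  have hpos : ∀ᶠ s in 𝓝[<] u, 0 < s := nhdsWithin_le_nhds (lt_mem_nhds hu)
  rcases lt_or_ge t₀ u with hu₀ | hu₀
  · have hD : ContinuousWithinAt (netCross star Ma Mb xa xb p q) (Iio u) u :=
      ContinuousWithinAt.finset_sup'_apply _ fun i _ =>
        h.tendsto (hMa.range _ _ _ hu.le) (hMb.range _ _ _ hu.le) (hMa.km5 _ _ u hu)
          (hMb.km5 _ _ u hu) (hpos.mono fun s hs => hMa.range _ _ _ hs.le)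
          (hpos.mono fun s hs => hMb.range _ _ _ hs.le)
    refine ContinuousWithinAt.congr_of_eventuallyEq (h.tendsto (netCross_mem h hMa hMb p q hu.le)
      he hD tendsto_const_nhds (hpos.mono fun s hs => netCross_mem h hMa hMb p q hs.le)
      (.of_forall fun _ => he)) ?_ (glueCross_of_lt p q hu₀)
    filter_upwards [nhdsWithin_le_nhds (lt_mem_nhds hu₀)] with s hs using glueCross_of_lt p q hs
  · have hCm : ∀ᶠ s in 𝓝[<] u, C s ∈ Icc (0:ℝ) 1 := hpos.mono hC
    have hCC := h.mem _ (hC u hu) _ (hC u hu)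
    refine ContinuousWithinAt.congr_of_eventuallyEq (h.tendsto hCC he
      (h.tendsto (hC u hu) (hC u hu) (hClc u hu) (hClc u hu) hCm hCm) tendsto_const_nhds
      (hpos.mono fun s hs => h.mem _ (hC s hs) _ (hC s hs)) (.of_forall fun _ => he)) ?_
      (glueCross_of_le p q hu hu₀)
    filter_upwards [hpos, self_mem_nhdsWithin] with s hs hsu
    exact glueCross_of_le p q hs ((le_of_lt hsu).trans hu₀)

theorem star_le_glueCross_of_lt (h : IsContinuousTNorm star) (hMa : IsNAFuzzyMetric star Ma)
    (hMb : IsNAFuzzyMetric star Mb) (he : e ∈ Icc (0:ℝ) 1) (ht₀ : 0 < t₀) {p : Xa} {i : ι}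
    (hp : e < Ma p (xa i) t₀) {t : ℝ} (ht : t₀ < t) :
    star e e ≤ glueCross star Ma Mb xa xb C t₀ e p (xb i) t := by
  have ht0 := ht₀.trans ht
  have hpi := hMa.range p (xa i) t ht0.le
  rw [glueCross_of_lt p _ ht]
  refine h.star_mono_left he he (netCross_mem h hMa hMb p _ ht0.le) ?_
  calc e ≤ Ma p (xa i) t := hp.le.trans (hMa.mono h _ _ ht₀ ht.le)
    _ = star (Ma p (xa i) t) (Mb (xb i) (xb i) t) := by
        rw [hMb.self_eq_one _ ht0, h.one _ hpi]
    _ ≤ _ := le_netCross p (xb i) t i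

end GlueCross

theorem star_le_MGH_of_close_nets {star : ℝ → ℝ → ℝ} (h : IsContinuousTNorm star)
    {Xa Xb ι : Type*} [Nonempty Xa] [Nonempty Xb] [Fintype ι]
    {Ma : Xa → Xa → ℝ → ℝ} {Mb : Xb → Xb → ℝ → ℝ} (hMa : IsNAFuzzyMetric star Ma)
    (hMb : IsNAFuzzyMetric star Mb) {C : ℝ → ℝ} (hC : ∀ s, 0 < s → C s ∈ Icc (0:ℝ) 1)
    (hCmono : MonotoneOn C (Ioi 0)) (hClc : ∀ s, 0 < s → ContinuousWithinAt C (Iio s) s)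
    (hCa : ∀ s, 0 < s → ∀ p p', C s ≤ Ma p p' s) (hCb : ∀ s, 0 < s → ∀ q q', C s ≤ Mb q q' s)
    {t₀ e : ℝ} (ht₀ : 0 < t₀) (he0 : 0 ≤ e) (he1 : e < 1) {xa : ι → Xa} {xb : ι → Xb}
    (hna : ∀ p, ∃ i, e < Ma p (xa i) t₀) (hnb : ∀ q, ∃ i, e < Mb q (xb i) t₀)
    (hab : ∀ u, t₀ < u → ∀ i j, star (Mb (xb i) (xb j) u) e ≤ Ma (xa i) (xa j) u)
    (hba : ∀ u, t₀ < u → ∀ i j, star (Ma (xa i) (xa j) u) e ≤ Mb (xb i) (xb j) u)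
    {t : ℝ} (ht : t₀ < t) :
    star e e ≤ MGH star Ma Mb t := by
  have : Nonempty ι := let ⟨i, _⟩ := hna (Classical.arbitrary Xa); ⟨i⟩
  have he : e ∈ Icc (0:ℝ) 1 := ⟨he0, he1.le⟩
  set G := glueCross star Ma Mb xa xb C t₀ e
  have hG := fun p q s (hs : 0 ≤ s) =>
    glueCross_mem_and_le (xa := xa) (xb := xb) (t₀ := t₀) h hMa hMb hC he p q hs
  have hswap : ∀ p q s, glueCross star Mb Ma xb xa C t₀ e q p s = G p q s :=
    glueCross_swap h hMa hMb ht₀.le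
  have ht0 := (ht₀.trans ht).le
  have hglue : IsNAFuzzyMetric star (glue Ma Mb G) := by
    refine isNAFuzzyMetric_glue h hMa hMb (fun p q s hs => (hG p q s hs).1)
      (glueCross_zero ht₀.le) (fun p q => ⟨t, ht₀.trans ht, ((hG p q t ht0).2).trans_lt he1⟩)
      (star_glueCross_le h hMa hMb hC hCmono hCa hCb he)
      (fun p q q' r s hr hs => ?_) (glueCross_star_glueCross_le h hMa hMb hC hCmono hCa he hab)
      (fun p q q' r s hr hs => ?_)
      fun p q u hu => continuousWithinAt_glueCross h hMa hMb hC hClc he p q hu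
    · have := star_glueCross_le h hMb hMa hC hCmono hCb hCa he q' q p hs hr (xa := xb) (xb := xa)
        (t₀ := t₀)
      rwa [hswap, hswap, max_comm, hMb.km3,
        h.comm _ (hMb.range _ _ _ hs.le) _ (hG p q r hr.le).1] at this
    · simpa only [hswap] using
        glueCross_star_glueCross_le h hMb hMa hC hCmono hCb he hba q q' p hr hs
  refine (le_fuzzyH hglue ht0 (fun p => ?_) (fun q => ?_)).trans
    (fuzzyH_le_MGH ⟨hglue, fun _ _ _ _ => rfl, fun _ _ _ _ => rfl⟩ ht0)
  · obtain ⟨i, hi⟩ := hna p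
    exact ⟨xb i, star_le_glueCross_of_lt h hMa hMb he ht₀ hi ht⟩
  · obtain ⟨i, hi⟩ := hnb q
    exact ⟨xa i, (hswap (xa i) q t ▸ star_le_glueCross_of_lt h hMb hMa he ht₀ hi ht :)⟩

theorem exists_subseq_tendsto_of_mem_Icc {ι : Type*} [Countable ι] (u : ℕ → ι → ℝ)
    (hu : ∀ n i, u n i ∈ Icc (0:ℝ) 1) :
    ∃ L : ι → ℝ, ∃ φ : ℕ → ℕ, StrictMono φ ∧
      ∀ i, Tendsto (fun k => u (φ k) i) atTop (𝓝 (L i)) := by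
  obtain ⟨L, -, φ, hφ, hlim⟩ := (isCompact_univ_pi fun _ => isCompact_Icc).tendsto_subseq
    fun n => mem_univ_pi.mpr (hu n)
  exact ⟨L, φ, hφ, tendsto_pi_nhds.mp hlim⟩

/-- By (TN1), `L ∗ e < L`, so the midpoint of the two eventually separates `u k ∗ e` from
`u j`. -/
theorem TN1.exists_star_le_of_tendsto {star : ℝ → ℝ → ℝ} (htn1 : TN1 star)
    (h : IsContinuousTNorm star) {ι : Type*} [Finite ι] {u : ℕ → ι → ℝ} {L : ι → ℝ}
    (hu : ∀ i, Tendsto (fun k => u k i) atTop (𝓝 (L i))) (hmem : ∀ k i, u k i ∈ Icc (0:ℝ) 1)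
    (hL : ∀ i, 0 < L i) {e : ℝ} (he0 : 0 ≤ e) (he1 : e < 1) :
    ∃ k₀, ∀ j k, k₀ ≤ j → k₀ ≤ k → ∀ i, star (u k i) e ≤ u j i := by
  have he : e ∈ Icc (0:ℝ) 1 := ⟨he0, he1.le⟩
  have hev : ∀ᶠ k in atTop, ∀ i, star (u k i) e < (L i + star (L i) e) / 2 ∧
      (L i + star (L i) e) / 2 < u k i := by
    refine eventually_all.mpr fun i => ?_
    have hLi : L i ∈ Icc (0:ℝ) 1 :=
      isClosed_Icc.mem_of_tendsto (hu i) (.of_forall fun k => hmem k i)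
    have hlt := htn1.star_lt_self h (hL i) hLi.2 he0 he1
    exact ((h.tendsto hLi he (hu i) tendsto_const_nhds (.of_forall fun k => hmem k i)
      (.of_forall fun _ => he)).eventually (gt_mem_nhds (by linarith))).and
      ((hu i).eventually (lt_mem_nhds (by linarith)))
  obtain ⟨k₀, hk₀⟩ := eventually_atTop.mp hev
  exact ⟨k₀, fun j k hj hk i => ((hk₀ k hk i).1.trans (hk₀ j hj i).2).le⟩

theorem IsContinuousTNorm.star_le_of_div_le_div {star : ℝ → ℝ → ℝ}
    (h : IsContinuousTNorm star) {a b a' b' e : ℝ} (ha' : a' ∈ Icc (0:ℝ) 1)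
    (hb' : b' ∈ Icc (0:ℝ) 1) (he : e ∈ Icc (0:ℝ) 1) (hb : 0 < star b e) (hba : star b e ≤ a)
    (hratio : a' < b' → a / star b e ≤ a' / star b' e) :
    star b' e ≤ a' := by
  rcases lt_or_ge a' b' with hlt | hge
  · rcases le_or_gt (star b' e) 0 with hb'0 | hb'0
    · exact hb'0.trans ha'.1
    · exact (one_le_div hb'0).mp (((one_le_div hb).mpr hba).trans (hratio hlt))
  · exact (h.star_le_left hb' he).trans hge

theorem IsContinuousTNorm.exists_nat_lt_star {star : ℝ → ℝ → ℝ} (h : IsContinuousTNorm star)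
    {ε c : ℝ} (hε : 0 < ε) (hc : c ∈ Ioc (0:ℝ) 1) :
    ∃ b : ℕ, 1 - ε < star (1 - 1 / ((b:ℝ) + 2)) (1 - 1 / ((b:ℝ) + 2)) ∧
      0 < star c (1 - 1 / ((b:ℝ) + 2)) := by
  have hc' : c ∈ Icc (0:ℝ) 1 := Ioc_subset_Icc_self hc
  have h1 : (1:ℝ) ∈ Icc (0:ℝ) 1 := by simp
  have hlim : Tendsto (fun b : ℕ => 1 - 1 / ((b:ℝ) + 2)) atTop (𝓝 1) := by
    simpa using (tendsto_const_nhds (x := (1:ℝ))).sub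
      (tendsto_atTop_add_const_right _ (2:ℝ) tendsto_natCast_atTop_atTop).inv_tendsto_atTop
  have hmem : ∀ᶠ b : ℕ in atTop, 1 - 1 / ((b:ℝ) + 2) ∈ Icc (0:ℝ) 1 := .of_forall fun b => by
    have : 1 / ((b:ℝ) + 2) ≤ 1 / 2 := by gcongr; linarith [b.cast_nonneg (α := ℝ)]
    constructor <;> [linarith; linarith [show 0 < 1 / ((b:ℝ) + 2) by positivity]]
  have hee := h.tendsto h1 h1 hlim hlim hmem hmem
  have hce := h.tendsto hc' h1 tendsto_const_nhds hlim (.of_forall fun _ => hc') hmem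
  rw [h.one 1 h1] at hee
  rw [h.one c hc'] at hce
  exact ((hee.eventually (lt_mem_nhds (by linarith))).and
    (hce.eventually (lt_mem_nhds hc.1))).exists

theorem exists_star_le_MGH_of_tendsto {star : ℝ → ℝ → ℝ} (h : IsContinuousTNorm star)
    (htn1 : TN1 star) {X : ℕ → Type*} [∀ n, Nonempty (X n)] {M : ∀ n, X n → X n → ℝ → ℝ}
    (hM : ∀ n, IsNAFuzzyMetric star (M n)) {C : ℝ → ℝ} (hC : ∀ s, 0 < s → C s ∈ Icc (0:ℝ) 1)
    (hCmono : MonotoneOn C (Ioi 0)) (hClc : ∀ s, 0 < s → ContinuousWithinAt C (Iio s) s)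
    (hCM : ∀ s, 0 < s → ∀ n p q, C s ≤ M n p q s) {t₀ e : ℝ} (ht₀ : 0 < t₀) (he0 : 0 ≤ e)
    (he1 : e < 1) (hCe : 0 < star (C t₀) e) {ι : Type*} [Fintype ι] (x : ∀ n, ι → X n)
    (hnet : ∀ n p, ∃ i, e < M n p (x n i) t₀)
    (hratio : ∀ n m s, t₀ < s → ∀ i j, M n (x n i) (x n j) s < M m (x m i) (x m j) s →
      M n (x n i) (x n j) t₀ / star (M m (x m i) (x m j) t₀) e ≤
        M n (x n i) (x n j) s / star (M m (x m i) (x m j) s) e)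
    {φ : ℕ → ℕ} {L : ι × ι → ℝ}
    (hL : ∀ ij, Tendsto (fun k => M (φ k) (x (φ k) ij.1) (x (φ k) ij.2) t₀) atTop (𝓝 (L ij))) :
    ∃ k₀, ∀ j k, k₀ ≤ j → k₀ ≤ k → ∀ t, t₀ < t → star e e ≤ MGH star (M (φ j)) (M (φ k)) t := by
  have he : e ∈ Icc (0:ℝ) 1 := ⟨he0, he1.le⟩
  have hCt₀ : 0 < C t₀ := hCe.trans_le (h.star_le_left (hC t₀ ht₀) he)
  obtain ⟨k₀, hk₀⟩ := htn1.exists_star_le_of_tendsto h hL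
    (fun k ij => (hM _).range _ _ _ ht₀.le)
    (fun ij => hCt₀.trans_le (ge_of_tendsto' (hL ij) fun k => hCM t₀ ht₀ _ _ _)) he0 he1
  have hclose : ∀ n m, k₀ ≤ n → k₀ ≤ m → ∀ u, t₀ < u → ∀ i i',
      star (M (φ m) (x (φ m) i) (x (φ m) i') u) e ≤ M (φ n) (x (φ n) i) (x (φ n) i') u :=
    fun n m hn hm u hu i i' => h.star_le_of_div_le_div ((hM _).range _ _ _ (ht₀.trans hu).le)
      ((hM _).range _ _ _ (ht₀.trans hu).le) he
      (hCe.trans_le (h.star_mono_left (hC t₀ ht₀) he ((hM _).range _ _ _ ht₀.le)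
        (hCM t₀ ht₀ _ _ _)))
      (hk₀ n m hn hm (i, i')) (hratio _ _ u hu i i')
  exact ⟨k₀, fun j k hj hk t ht => star_le_MGH_of_close_nets h (hM _) (hM _) hC hCmono hClc
    (fun s hs => hCM s hs _) (fun s hs => hCM s hs _) ht₀ he0 he1 (hnet _) (hnet _)
    (hclose j k hj hk) (hclose k j hk hj) ht⟩

universe u

theorem fuzzy_precompactness_cauchy_general (star : ℝ → ℝ → ℝ) (hstar : IsContinuousTNorm star)
    (X : ℕ → Type u) [∀ n, Nonempty (X n)]
    (M : ∀ n, X n → X n → ℝ → ℝ)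
    (hM : ∀ n, IsNAFuzzyMetric star (M n))
    -- (1) the t-norm satisfies (TN1)
    (htn1 : TN1 star)
    -- (2) a nondecreasing left-continuous lower bound for all the `s`-diameters
    (C : ℝ → ℝ) (hCmono : MonotoneOn C (Ioi 0))
    (hClc : ∀ s, 0 < s → ContinuousWithinAt C (Iio s) s)
    (hC : ∀ s, 0 < s → 0 < C s ∧ C s ≤ 1 ∧ ∀ n, C s ≤ fuzzyDiam (M n) s)
    -- (3) a uniform bound on the cover numbers
    (N : ℝ → ℝ → ℕ)
    -- (4) compatible `(t,ε)`-nets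
    (hnets : ∀ t ε : ℝ, 0 < t → 0 < ε → ε < 1 →
      ∃ x : ∀ n, Fin (N ε t) → X n,
        (∀ n, ∀ p : X n, ∃ i, 1 - ε < M n p (x n i) t) ∧
        (∀ n m, ∀ s, t < s → ∀ i j,
          M n (x n i) (x n j) s < M m (x m i) (x m j) s →
          M n (x n i) (x n j) t / star (M m (x m i) (x m j) t) (1 - ε) ≤
            M n (x n i) (x n j) s / star (M m (x m i) (x m j) s) (1 - ε))) :
    ∃ φ : ℕ → ℕ, StrictMono φ ∧
      ∀ t ε : ℝ, 0 < t → 0 < ε → ε < 1 →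
        ∃ k0 : ℕ, ∀ j k, k0 ≤ j → k0 ≤ k →
          1 - ε < MGH star (M (φ j)) (M (φ k)) t := by
  have hCmem : ∀ s, 0 < s → C s ∈ Icc (0:ℝ) 1 := fun s hs => ⟨(hC s hs).1.le, (hC s hs).2.1⟩
  have hCM : ∀ s, 0 < s → ∀ n p q, C s ≤ M n p q s := fun s hs n p q =>
    ((hC s hs).2.2 n).trans ((hM n).fuzzyDiam_le p q hs.le)
  have ht₀ : ∀ a : ℕ, 0 < 1 / ((a:ℝ) + 1) := fun a => by positivity
  have hδ : ∀ b : ℕ, 0 < 1 / ((b:ℝ) + 2) ∧ 1 / ((b:ℝ) + 2) < 1 := fun b =>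
    ⟨by positivity, by rw [div_lt_one (by positivity)]; linarith [b.cast_nonneg (α := ℝ)]⟩
  choose x hnet hratio using fun ab : ℕ × ℕ => hnets _ _ (ht₀ ab.1) (hδ ab.2).1 (hδ ab.2).2
  obtain ⟨L, φ, hφ, hL⟩ := exists_subseq_tendsto_of_mem_Icc
    (fun n (v : Σ ab : ℕ × ℕ, Fin (N (1 / ((ab.2:ℝ) + 2)) (1 / ((ab.1:ℝ) + 1))) ×
      Fin (N (1 / ((ab.2:ℝ) + 2)) (1 / ((ab.1:ℝ) + 1)))) =>
        M n (x v.1 n v.2.1) (x v.1 n v.2.2) (1 / ((v.1.1:ℝ) + 1)))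
    fun n v => (hM n).range _ _ _ (ht₀ _).le
  refine ⟨φ, hφ, fun t ε ht hε0 hε1 => ?_⟩
  obtain ⟨a, ha⟩ := exists_nat_one_div_lt ht
  obtain ⟨b, hbε, hbC⟩ := hstar.exists_nat_lt_star hε0 ⟨(hC _ (ht₀ a)).1, (hC _ (ht₀ a)).2.1⟩
  obtain ⟨k0, hk0⟩ := exists_star_le_MGH_of_tendsto hstar htn1 hM hCmem hCmono hClc hCM (ht₀ a)
    (by linarith [hδ b]) (by linarith [hδ b]) hbC (x (a, b)) (hnet (a, b)) (hratio (a, b))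
    (fun ij => hL ⟨(a, b), ij⟩)
  exact ⟨k0, fun j k hj hk => hbε.trans_le (hk0 j k hj hk t ha)⟩

/-- Corollary to Theorem `th:main1`: a sequence of nonempty compact
non-Archimedean fuzzy metric spaces satisfying (1)-(4) has a Cauchy subsequence with
respect to the non-Archimedean Gromov-Hausdorff fuzzy distance. -/
theorem fuzzy_precompactness_cauchy (star : ℝ → ℝ → ℝ) (hstar : IsContinuousTNorm star)
    (X : ℕ → Type u) [∀ n, TopologicalSpace (X n)] [∀ n, CompactSpace (X n)]
    [∀ n, Nonempty (X n)]
    (M : ∀ n, X n → X n → ℝ → ℝ)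
    (hM : ∀ n, IsNAFuzzyMetric star (M n)) (hcomp : ∀ n, FuzzyCompatible (M n))
    -- (1) the t-norm satisfies (TN1)
    (htn1 : TN1 star)
    -- (2) a nondecreasing left-continuous lower bound for all the `s`-diameters
    (C : ℝ → ℝ) (hCmono : MonotoneOn C (Ioi 0))
    (hClc : ∀ s, 0 < s → ContinuousWithinAt C (Iio s) s)
    (hC : ∀ s, 0 < s → 0 < C s ∧ C s ≤ 1 ∧ ∀ n, C s ≤ fuzzyDiam (M n) s)
    -- (3) a uniform bound on the cover numbers
    (N : ℝ → ℝ → ℕ)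
    (hcov : ∀ ε t : ℝ, 0 < t → 0 < ε → ε < 1 → ∀ n, CovLE (M n) ε t (N ε t))
    -- (4) compatible `(t,ε)`-nets
    (hnets : ∀ t ε : ℝ, 0 < t → 0 < ε → ε < 1 →
      ∃ x : ∀ n, Fin (N ε t) → X n,
        (∀ n, ∀ p : X n, ∃ i, 1 - ε < M n p (x n i) t) ∧
        (∀ n m, ∀ s, t < s → ∀ i j,
          M n (x n i) (x n j) s < M m (x m i) (x m j) s →
          M n (x n i) (x n j) t / star (M m (x m i) (x m j) t) (1 - ε) ≤
            M n (x n i) (x n j) s / star (M m (x m i) (x m j) s) (1 - ε))) :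
    ∃ φ : ℕ → ℕ, StrictMono φ ∧
      ∀ t ε : ℝ, 0 < t → 0 < ε → ε < 1 →
        ∃ k0 : ℕ, ∀ j k, k0 ≤ j → k0 ≤ k →
          1 - ε < MGH star (M (φ j)) (M (φ k)) t :=
  fuzzy_precompactness_cauchy_general star hstar X M hM htn1 C hCmono hClc hC N hnets
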